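/- Let c > 0 and let X be a random variable with density f_c(ρ) = (c/(2√π))·ρ^{−3/2}·exp(−c²/(4ρ)) on (0,∞); let h be an exponential random variable with rate λ > 0, independent of X; let K > 0 and a, b > 0. Define B = P[ h > K/X and X > a ] and O_STP = B·P[X ≤ a] + (1 − B)·P[X ≤ b]. Then O_STP = ( ∫_a^∞ exp(−λK/ρ)·f_c(ρ) dρ )·( erfc(c/(2√a)) − erfc(c/(2√b)) ) + erfc(c/(2√b)). -/

import Mathlib

open MeasureTheory ProbabilityTheory Set

/-- The complementary error function `erfc(x) = (2/√π)·∫_x^∞ exp(−t²) dt`. -/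
noncomputable def erfc (x : ℝ) : ℝ :=
  (2 / Real.sqrt Real.pi) * ∫ t in Ioi x, Real.exp (-t ^ 2)

/-- The Lévy-type density on `(0,∞)`: `f_c(ρ) = (c/(2√π))·ρ^{−3/2}·exp(−c²/(4ρ))`. -/
noncomputable def levyDensity (c ρ : ℝ) : ℝ :=
  c / (2 * Real.sqrt Real.pi) * ρ ^ (-(3 : ℝ) / 2) * Real.exp (-(c ^ 2 / (4 * ρ)))

/-!
`ρ ↦ erfc (c / (2√ρ))` is an antiderivative of `f_c` on `(0, ∞)` tending to `1` at infinity, so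
it is the CDF of `X`. By independence, `P[h > K/X, X > a]` is the integral over `{X > a}` of the
exponential tail `P[h > t] = exp (-λt)` at `t = K/X`; the identity is then ring arithmetic.
-/

open Filter Topology Real

lemma integrable_exp_neg_sq : Integrable fun t : ℝ => exp (-t ^ 2) := by
  simpa using integrable_exp_neg_mul_sq one_pos

lemma erfc_eq_one_sub_integral (x : ℝ) :
    erfc x = 1 - 2 / √π * ∫ t in (0 : ℝ)..x, exp (-t ^ 2) := by
  have half_line : ∫ t in Ioi (0 : ℝ), exp (-t ^ 2) = √π / 2 := by
    simpa using integral_gaussian_Ioi 1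
  rw [← intervalIntegral.integral_Ioi_sub_Ioi' integrable_exp_neg_sq.integrableOn
    integrable_exp_neg_sq.integrableOn, half_line, erfc]
  field_simp [(sqrt_pos.2 pi_pos).ne']
  ring

lemma hasDerivAt_erfc (x : ℝ) : HasDerivAt erfc (-(2 / √π) * exp (-x ^ 2)) x := by
  have hprim := (continuous_exp.comp (continuous_pow 2).neg).integral_hasStrictDerivAt 0 x
  rw [funext erfc_eq_one_sub_integral]
  simpa using (hprim.hasDerivAt.const_mul (2 / √π)).const_sub 1

lemma erfc_zero : erfc 0 = 1 := by
  simp [erfc_eq_one_sub_integral]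

lemma levyDensity_nonneg {c ρ : ℝ} (hc : 0 ≤ c) (hρ : 0 ≤ ρ) : 0 ≤ levyDensity c ρ := by
  unfold levyDensity
  have := rpow_nonneg hρ (-(3 : ℝ) / 2)
  positivity

lemma rpow_neg_three_halves {ρ : ℝ} (hρ : 0 < ρ) : ρ ^ (-(3 : ℝ) / 2) = (ρ * √ρ)⁻¹ := by
  rw [show -(3 : ℝ) / 2 = -(1 + 1 / 2) by norm_num, rpow_neg hρ.le, rpow_add hρ, rpow_one,
    ← sqrt_eq_rpow]

lemma hasDerivAt_erfc_div_two_sqrt (c : ℝ) {ρ : ℝ} (hρ : 0 < ρ) :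
    HasDerivAt (fun y => erfc (c / (2 * √y))) (levyDensity c ρ) ρ := by
  have hsqrt : 0 < √ρ := sqrt_pos.2 hρ
  have hinner : HasDerivAt (fun y => c / (2 * √y)) (-(c / (4 * ρ * √ρ))) ρ := by
    have := (hasDerivAt_const ρ c).div ((hasDerivAt_sqrt hρ.ne').const_mul 2) (by positivity)
    refine this.congr_deriv ?_
    field_simp
    rw [sq_sqrt hρ.le]
    ring
  refine ((hasDerivAt_erfc _).comp ρ hinner).congr_deriv ?_
  rw [levyDensity, rpow_neg_three_halves hρ, div_pow, mul_pow, sq_sqrt hρ.le]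
  field_simp
  ring_nf

lemma tendsto_erfc_div_two_sqrt_atTop (c : ℝ) :
    Tendsto (fun y => erfc (c / (2 * √y))) atTop (𝓝 1) := by
  rw [← erfc_zero]
  exact ((hasDerivAt_erfc 0).continuousAt.tendsto).comp
    (tendsto_const_nhds.div_atTop (tendsto_sqrt_atTop.const_mul_atTop two_pos))

lemma integral_Ioi_levyDensity {c a : ℝ} (hc : 0 ≤ c) (ha : 0 < a) :
    ∫ ρ in Ioi a, levyDensity c ρ = 1 - erfc (c / (2 * √a)) :=
  integral_Ioi_of_hasDerivAt_of_nonneg'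
    (fun _ hρ => hasDerivAt_erfc_div_two_sqrt c (ha.trans_le hρ))
    (fun _ hρ => levyDensity_nonneg hc (ha.trans hρ).le) (tendsto_erfc_div_two_sqrt_atTop c)

noncomputable def levyMeasure (c : ℝ) : Measure ℝ :=
  (volume.restrict (Ioi 0)).withDensity fun ρ => ENNReal.ofReal (levyDensity c ρ)

lemma setIntegral_levyMeasure_Ioi {c a : ℝ} (hc : 0 ≤ c) (ha : 0 ≤ a) (g : ℝ → ℝ) :
    ∫ ρ in Ioi a, g ρ ∂levyMeasure c = ∫ ρ in Ioi a, g ρ * levyDensity c ρ := by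
  have hmeas : Measurable fun ρ => levyDensity c ρ := by unfold levyDensity; fun_prop
  rw [levyMeasure, setIntegral_withDensity_eq_setIntegral_toReal_smul₀' _
      hmeas.ennreal_ofReal.aemeasurable (ae_of_all _ fun _ => ENNReal.ofReal_lt_top),
    Measure.restrict_restrict measurableSet_Ioi, inter_eq_left.2 (Ioi_subset_Ioi ha)]
  refine setIntegral_congr_fun measurableSet_Ioi fun ρ hρ => ?_
  rw [ENNReal.toReal_ofReal (levyDensity_nonneg hc (ha.trans_lt hρ).le), smul_eq_mul, mul_comm]

lemma levyMeasure_real_Ioi {c a : ℝ} (hc : 0 ≤ c) (ha : 0 < a) :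
    (levyMeasure c).real (Ioi a) = 1 - erfc (c / (2 * √a)) := by
  have := setIntegral_levyMeasure_Ioi hc ha.le fun _ => 1
  rw [setIntegral_const, smul_eq_mul, mul_one] at this
  simpa [this] using integral_Ioi_levyDensity hc ha

lemma expMeasure_real_Ioi {r t : ℝ} (hr : 0 < r) (ht : 0 ≤ t) :
    (expMeasure r).real (Ioi t) = exp (-(r * t)) := by
  have := isProbabilityMeasure_expMeasure hr
  rw [← compl_Iic, probReal_compl_eq_one_sub measurableSet_Iic, ← cdf_eq_real,
    cdf_expMeasure_eq hr, if_pos ht, sub_sub_cancel]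

lemma ProbabilityTheory.IndepFun.measureReal_preimage_prodMk {Ω α β : Type*} [MeasurableSpace Ω]
    [MeasurableSpace α] [MeasurableSpace β] {P : Measure Ω} [IsFiniteMeasure P]
    {X : Ω → α} {Y : Ω → β} (hX : Measurable X) (hY : Measurable Y) (hXY : IndepFun X Y P)
    {S : Set (α × β)} (hS : MeasurableSet S) :
    P.real ((fun ω => (X ω, Y ω)) ⁻¹' S) = ∫ x, (P.map Y).real (Prod.mk x ⁻¹' S) ∂P.map X := by
  rw [measureReal_def, ← Measure.map_apply (hX.prodMk hY) hS,
    (indepFun_iff_map_prod_eq_prod_map_map hX.aemeasurable hY.aemeasurable).1 hXY,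
    Measure.prod_apply hS]
  exact (integral_toReal (measurable_measure_prodMk_left hS).aemeasurable
    (ae_of_all _ fun _ => measure_lt_top _ _)).symm

lemma measureReal_le_eq_erfc {Ω : Type*} [MeasurableSpace Ω] {P : Measure Ω}
    [IsProbabilityMeasure P] {X : Ω → ℝ} {c t : ℝ} (hX : Measurable X)
    (hXlaw : P.map X = levyMeasure c) (hc : 0 ≤ c) (ht : 0 < t) :
    P.real {ω | X ω ≤ t} = erfc (c / (2 * √t)) := by
  have hcompl : {ω | X ω ≤ t} = (X ⁻¹' Ioi t)ᶜ := by ext; simp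
  rw [hcompl, probReal_compl_eq_one_sub (hX measurableSet_Ioi),
    ← map_measureReal_apply hX measurableSet_Ioi, hXlaw, levyMeasure_real_Ioi hc ht,
    sub_sub_cancel]

lemma measureReal_div_lt_and_lt_eq_setIntegral {Ω : Type*} [MeasurableSpace Ω] {P : Measure Ω}
    [IsProbabilityMeasure P] {X Y : Ω → ℝ} {r K a : ℝ} (hX : Measurable X) (hY : Measurable Y)
    (hXY : IndepFun X Y P) (hYlaw : P.map Y = expMeasure r) (hr : 0 < r) (hK : 0 ≤ K)
    (ha : 0 ≤ a) :
    P.real {ω | Y ω > K / X ω ∧ X ω > a} = ∫ x in Ioi a, exp (-(r * K / x)) ∂P.map X := by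
  set S : Set (ℝ × ℝ) := {p | K / p.1 < p.2 ∧ a < p.1}
  have hS : MeasurableSet S :=
    (measurableSet_lt (by fun_prop) measurable_snd).inter
      (measurableSet_lt measurable_const measurable_fst)
  have hsection : ∀ x, (expMeasure r).real (Prod.mk x ⁻¹' S) =
      (Ioi a).indicator (fun x => exp (-(r * K / x))) x := by
    intro x
    by_cases hx : a < x
    · have : Prod.mk x ⁻¹' S = Ioi (K / x) := by
        ext; simp [S, hx]
      rw [this, expMeasure_real_Ioi hr (div_nonneg hK (ha.trans hx.le)),
        indicator_of_mem (show x ∈ Ioi a from hx), mul_div_assoc]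
    · have : Prod.mk x ⁻¹' S = ∅ := by
        ext; simp [S, hx]
      rw [this, measureReal_empty, indicator_of_notMem (show x ∉ Ioi a from hx)]
  rw [← integral_indicator measurableSet_Ioi, ← funext hsection, ← hYlaw]
  exact hXY.measureReal_preimage_prodMk hX hY hS

/-- Energy outage probability under STP in the PPP/Rayleigh/μ=4 special case:
with `X` of density `f_c` on `(0,∞)`, `h` exponential with rate `λ > 0`
independent of `X`, `K > 0`, `a, b > 0`, and
`B = P[h > K/X and X > a]`,
`O_STP = B·P[X ≤ a] + (1 − B)·P[X ≤ b]
       = (∫_a^∞ exp(−λK/ρ)·f_c(ρ) dρ)·(erfc(c/(2√a)) − erfc(c/(2√b))) + erfc(c/(2√b))`. -/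
theorem energy_outage_STP {Ω : Type*} [MeasurableSpace Ω]
    (P : Measure Ω) [IsProbabilityMeasure P]
    (c : ℝ) (hc : 0 < c) (X h : Ω → ℝ) (hXm : Measurable X) (hhm : Measurable h)
    (lam : ℝ) (hlam : 0 < lam)
    (hXlaw : Measure.map X P =
      (volume.restrict (Ioi (0 : ℝ))).withDensity fun ρ => ENNReal.ofReal (levyDensity c ρ))
    (hhlaw : Measure.map h P = expMeasure lam)
    (hind : IndepFun X h P)
    (K : ℝ) (hK : 0 < K) (a b : ℝ) (ha : 0 < a) (hb : 0 < b) :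
    (P {x | h x > K / X x ∧ X x > a}).toReal * (P {x | X x ≤ a}).toReal +
        (1 - (P {x | h x > K / X x ∧ X x > a}).toReal) * (P {x | X x ≤ b}).toReal =
      (∫ ρ in Ioi a, Real.exp (-(lam * K / ρ)) * levyDensity c ρ) *
          (erfc (c / (2 * Real.sqrt a)) - erfc (c / (2 * Real.sqrt b))) +
        erfc (c / (2 * Real.sqrt b)) := by
  have hXlevy : P.map X = levyMeasure c := hXlaw
  simp only [← measureReal_def]
  rw [measureReal_div_lt_and_lt_eq_setIntegral hXm hhm hind hhlaw hlam hK.le ha.le, hXlevy,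
    setIntegral_levyMeasure_Ioi hc.le ha.le, measureReal_le_eq_erfc hXm hXlevy hc.le ha,
    measureReal_le_eq_erfc hXm hXlevy hc.le hb]
  ring
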